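/- For every K > 0 there exist ε₀ ∈ (0, 1/2) and C > 0 such that the following holds: let ε ∈ (0, ε₀] and let w : ℝ² → ℝ be measurable with 0 ≤ w(x) ≤ K/ε² for almost every x, ∫_{ℝ²} w(x) dx = 1, ∫_{ℝ²} (1 + |x|²) w(x) dx ≤ 2 + Kε, and ∫_{ℝ²} ∫_{ℝ²} log(1/|x−y|) 1_{|x−y|≤1} ⟨x⟩ w(x) w(y) dx dy ≥ √2 log(1/ε) − K. Then for every α ∈ (0, 1] there exists a point p* ∈ ℝ² such that ∫_{|x − p*| ≥ ε^{1−α}} ⟨x⟩ w(x) dx ≤ C / (α log(1/ε)). -/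

import Mathlib

open MeasureTheory Real intervalIntegral

/-- Euclidean norm on `ℝ²`. -/
noncomputable def vnorm (x : ℝ × ℝ) : ℝ := Real.sqrt (x.1 ^ 2 + x.2 ^ 2)

/-- Rotation `R_a` on `ℝ²`. -/
noncomputable def vrot (a : ℝ) (x : ℝ × ℝ) : ℝ × ℝ :=
  (x.1 * Real.cos a + x.2 * Real.sin a, -x.1 * Real.sin a + x.2 * Real.cos a)

/-- Japanese bracket `⟨x⟩ = √(1+|x|²)` on `ℝ²`. -/
noncomputable def jap (x : ℝ × ℝ) : ℝ := Real.sqrt (1 + x.1 ^ 2 + x.2 ^ 2)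

/-- The truncated logarithmic potential
`Gw(x) = ∫ log(1/|x−y|) 1_{|x−y|≤1} w(y) dy`. -/
noncomputable def Gfun (w : ℝ × ℝ → ℝ) (x : ℝ × ℝ) : ℝ :=
  ∫ y : ℝ × ℝ, (if vnorm (x - y) ≤ 1 then Real.log (1 / vnorm (x - y)) else 0) * w y

/-!
Splitting the kernel at scale `ρ = ε` and using `w ≤ K/ε²` against `∫ log⁺ (ε/|z|) dz ≤ 4ε²` shows
that the potential `Gfun w` is at most `log (1/ε) + 4K` everywhere. By AM–GM, `2√2 ⟨x⟩ ≤ 3 + |x|²`,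
so `∫ ⟨x⟩ w ≤ √2 + Kε`, and the energy lower bound `√2 log (1/ε) - K` is saturated up to `O(1)`.
Hence all but `O(1/(α log (1/ε)))` of the mass `⟨x⟩ w` lies on the superlevel set
`A = {Gfun w ≥ (1 - α/8) log (1/ε)}`. Splitting the kernel at scale `δ = ε^(1-α/2)` instead shows
that every point of `A` has more than half of the mass of `w` within distance `δ`, so any two points
of `A` are `2δ < ε^(1-α)` apart and any point of `A` can serve as `p*`. When `α log (1/ε)` is
bounded the claim holds trivially with `p* = 0`.
-/

open Set

lemma log_one_div_nonneg {r : ℝ} (hr0 : 0 ≤ r) (hr1 : r ≤ 1) : 0 ≤ log (1 / r) := by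
  rw [one_div, log_inv, neg_nonneg]
  exact log_nonpos hr0 hr1

lemma mul_log_one_div_le_one {ε : ℝ} (hε : 0 < ε) : ε * log (1 / ε) ≤ 1 := by
  have h := log_le_sub_one_of_pos (one_div_pos.mpr hε)
  calc ε * log (1 / ε) ≤ ε * (1 / ε - 1) := mul_le_mul_of_nonneg_left h hε.le
    _ ≤ 1 := by rw [mul_sub, mul_one_div_cancel hε.ne']; linarith

lemma log_one_div_rpow {ε : ℝ} (hε : 0 < ε) (a : ℝ) : log (1 / ε ^ a) = a * log (1 / ε) := by
  rw [one_div, one_div, log_inv, log_inv, log_rpow hε]; ring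

lemma two_mul_rpow_lt_rpow {ε α : ℝ} (hε : 0 < ε) (h : 2 < α * log (1 / ε)) :
    2 * ε ^ (1 - α / 2) < ε ^ (1 - α) := by
  have hsmall : ε ^ (α / 2) < 1 / 2 := by
    rw [rpow_def_of_pos hε]
    calc exp (log ε * (α / 2)) < exp (-1) := by
          rw [exp_lt_exp]
          rw [one_div, log_inv] at h
          linarith
      _ < 1 / 2 := by
          rw [exp_neg, inv_lt_comm₀ (exp_pos 1) (by norm_num)]
          linarith [exp_one_gt_d9]
  have hsplit : ε ^ (1 - α / 2) = ε ^ (1 - α) * ε ^ (α / 2) := by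
    rw [← rpow_add hε]; ring_nf
  rw [hsplit]
  nlinarith [rpow_pos_of_pos hε (1 - α)]

lemma ite_log_one_div_nonneg {r : ℝ} (hr : 0 ≤ r) : 0 ≤ if r ≤ 1 then log (1 / r) else 0 := by
  split_ifs with h
  · exact log_one_div_nonneg hr h
  · exact le_rfl

lemma ite_log_one_div_le {ρ δ r : ℝ} (hρ : 0 < ρ) (hρδ : ρ ≤ δ) (hδ : δ ≤ 1) (hr : 0 ≤ r) :
    (if r ≤ 1 then log (1 / r) else 0) ≤
      log (1 / δ) + (if r ≤ δ then log (1 / ρ) - log (1 / δ) else 0) + log⁺ (ρ / r) := by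
  have hδ0 : 0 < δ := hρ.trans_le hρδ
  have hlogδ : 0 ≤ log (1 / δ) := log_one_div_nonneg hδ0.le hδ
  have hpos : 0 ≤ log⁺ (ρ / r) := posLog_nonneg
  split_ifs with h1 hδr hδr
  · rcases hr.eq_or_lt with h0 | h0
    · simpa [← h0] using log_nonpos hρ.le (hρδ.trans hδ)
    · have : log (1 / r) = log (1 / ρ) + log (ρ / r) := by
        rw [← log_mul (by positivity) (by positivity)]; field_simp
      have : log (ρ / r) ≤ log⁺ (ρ / r) := le_max_right _ _
      linarith
  · have hr0 : 0 < r := hδ0.trans (not_le.mp hδr)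
    have : log (1 / r) ≤ log (1 / δ) :=
      log_le_log (by positivity) (one_div_le_one_div_of_le hδ0 (not_le.mp hδr).le)
    linarith
  · exact absurd (hδr.trans hδ) h1
  · linarith

lemma lintegral_ofReal_le_of_meas_lt_le_exp {α : Type*} [MeasurableSpace α] {μ : Measure α}
    {f : α → ℝ} {c : ℝ} (hf : Measurable f) (hf0 : ∀ x, 0 ≤ f x) (hc : 0 ≤ c)
    (htail : ∀ t > 0, μ {x | t < f x} ≤ ENNReal.ofReal (c * exp (-t))) :
    ∫⁻ x, ENNReal.ofReal (f x) ∂μ ≤ ENNReal.ofReal c := by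
  have hexp : IntegrableOn (fun t : ℝ => exp (-t)) (Ioi 0) := by
    simpa using exp_neg_integrableOn_Ioi 0 one_pos
  rw [lintegral_eq_lintegral_meas_lt μ (Filter.Eventually.of_forall hf0) hf.aemeasurable]
  calc ∫⁻ t in Ioi 0, μ {x | t < f x} ≤ ∫⁻ t in Ioi 0, ENNReal.ofReal (c * exp (-t)) :=
        setLIntegral_mono' measurableSet_Ioi htail
    _ = ENNReal.ofReal c := by
        rw [← ofReal_integral_eq_lintegral_ofReal (hexp.const_mul c)
          (Filter.Eventually.of_forall fun t => by positivity), MeasureTheory.integral_const_mul,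
          integral_exp_neg_Ioi_zero, mul_one]

lemma integral_mul_le_of_superlevel {α : Type*} [MeasurableSpace α] {μ : Measure α}
    {f g : α → ℝ} {M : ℝ} (θ : ℝ) (hf : Integrable f μ) (hf0 : ∀ᵐ x ∂μ, 0 ≤ f x)
    (hg : Measurable g) (hg0 : ∀ x, 0 ≤ g x) (hgM : ∀ x, g x ≤ M) :
    ∫ x, f x * g x ∂μ ≤ θ * (∫ x, f x ∂μ) + (M - θ) * ∫ x in {x | θ ≤ g x}, f x ∂μ := by
  have hA : MeasurableSet {x | θ ≤ g x} := measurableSet_le measurable_const hg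
  have hmaj : Integrable (fun x => θ * f x + (M - θ) * {x | θ ≤ g x}.indicator f x) μ :=
    (hf.const_mul θ).add ((hf.indicator hA).const_mul (M - θ))
  calc ∫ x, f x * g x ∂μ ≤ ∫ x, (θ * f x + (M - θ) * {x | θ ≤ g x}.indicator f x) ∂μ := by
        refine integral_mono_of_nonneg ?_ hmaj ?_
        · filter_upwards [hf0] with x hx using mul_nonneg hx (hg0 x)
        · filter_upwards [hf0] with x hx
          by_cases hx' : θ ≤ g x
          · rw [Set.indicator_of_mem (show x ∈ {x | θ ≤ g x} from hx')]
            nlinarith [hgM x]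
          · rw [Set.indicator_of_notMem (show x ∉ {x | θ ≤ g x} from hx')]
            nlinarith
    _ = _ := by
        rw [integral_add (hf.const_mul θ) ((hf.indicator hA).const_mul (M - θ)),
          MeasureTheory.integral_const_mul, MeasureTheory.integral_const_mul,
          MeasureTheory.integral_indicator hA]

lemma vnorm_eq_norm_toLp (x : ℝ × ℝ) : vnorm x = ‖WithLp.toLp 2 x‖ := by
  simp [WithLp.prod_norm_eq_of_L2, vnorm]

lemma vnorm_nonneg (x : ℝ × ℝ) : 0 ≤ vnorm x := Real.sqrt_nonneg _

lemma vnorm_sub_le_add (x x' y : ℝ × ℝ) : vnorm (x - x') ≤ vnorm (x - y) + vnorm (x' - y) := by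
  simp only [vnorm_eq_norm_toLp, WithLp.toLp_sub, ← dist_eq_norm]
  exact dist_triangle_right _ _ _

lemma continuous_vnorm : Continuous vnorm := by
  unfold vnorm; fun_prop

lemma norm_le_vnorm (x : ℝ × ℝ) : ‖x‖ ≤ vnorm x := by
  rw [Prod.norm_def, vnorm, Real.norm_eq_abs, Real.norm_eq_abs, ← Real.sqrt_sq_eq_abs,
    ← Real.sqrt_sq_eq_abs]
  exact max_le (Real.sqrt_le_sqrt (by nlinarith [sq_nonneg x.2]))
    (Real.sqrt_le_sqrt (by nlinarith [sq_nonneg x.1]))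

lemma volume_setOf_vnorm_lt_le {s : ℝ} (hs : 0 ≤ s) :
    volume {z : ℝ × ℝ | vnorm z < s} ≤ ENNReal.ofReal (4 * s ^ 2) := by
  calc volume {z : ℝ × ℝ | vnorm z < s} ≤ volume (Metric.ball ((0 : ℝ), (0 : ℝ)) s) :=
        measure_mono fun z hz => mem_ball_zero_iff.mpr ((norm_le_vnorm z).trans_lt hz)
    _ = ENNReal.ofReal (4 * s ^ 2) := by
        rw [← ball_prod_same, Measure.volume_eq_prod, Measure.prod_prod, Real.volume_ball,
          ← ENNReal.ofReal_mul (by positivity)]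
        ring_nf

lemma measurableSet_setOf_vnorm_sub_le (x : ℝ × ℝ) (δ : ℝ) :
    MeasurableSet {y : ℝ × ℝ | vnorm (x - y) ≤ δ} :=
  measurableSet_le (continuous_vnorm.comp (continuous_const.sub continuous_id)).measurable
    measurable_const

lemma vnorm_sub_le_of_half_lt_setIntegral {w : ℝ × ℝ → ℝ} (hw0 : ∀ᵐ y, 0 ≤ w y)
    (hwi : Integrable w) (hw1 : ∫ y, w y ≤ 1) {x x' : ℝ × ℝ} {δ : ℝ}
    (hx : 1 / 2 < ∫ y in {y | vnorm (x - y) ≤ δ}, w y)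
    (hx' : 1 / 2 < ∫ y in {y | vnorm (x' - y) ≤ δ}, w y) : vnorm (x - x') ≤ 2 * δ := by
  by_contra hfar
  have hdisj : Disjoint {y | vnorm (x - y) ≤ δ} {y | vnorm (x' - y) ≤ δ} :=
    Set.disjoint_left.mpr fun y hy hy' => hfar <| by
      linarith [vnorm_sub_le_add x x' y, show vnorm (x - y) ≤ δ from hy,
        show vnorm (x' - y) ≤ δ from hy']
  have hunion : ∫ y in {y | vnorm (x - y) ≤ δ} ∪ {y | vnorm (x' - y) ≤ δ}, w y ≤ ∫ y, w y :=
    setIntegral_le_integral hwi hw0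
  rw [setIntegral_union hdisj (measurableSet_setOf_vnorm_sub_le x' δ) hwi.integrableOn
    hwi.integrableOn] at hunion
  linarith

lemma measurable_posLog_div_vnorm (ρ : ℝ) : Measurable fun z : ℝ × ℝ => log⁺ (ρ / vnorm z) :=
  continuous_posLog.measurable.comp (measurable_const.div continuous_vnorm.measurable)

lemma volume_lt_posLog_div_vnorm_le {ρ t : ℝ} (hρ : 0 < ρ) (ht : 0 < t) :
    volume {z : ℝ × ℝ | t < log⁺ (ρ / vnorm z)} ≤ ENNReal.ofReal (4 * ρ ^ 2 * exp (-t)) := by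
  have hsub : {z : ℝ × ℝ | t < log⁺ (ρ / vnorm z)} ⊆ {z | vnorm z < ρ * exp (-t)} := by
    intro z hz
    have hlog : t < log (ρ / vnorm z) := by simpa [posLog, ht.not_gt] using hz
    rcases (vnorm_nonneg z).eq_or_lt with h0 | h0
    · rw [← h0, div_zero, log_zero] at hlog
      linarith
    rw [lt_log_iff_exp_lt (by positivity), lt_div_iff₀ h0] at hlog
    show vnorm z < ρ * exp (-t)
    rwa [exp_neg, ← div_eq_mul_inv, lt_div_iff₀ (exp_pos t), mul_comm]
  calc volume {z : ℝ × ℝ | t < log⁺ (ρ / vnorm z)} ≤ volume {z | vnorm z < ρ * exp (-t)} :=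
        measure_mono hsub
    _ ≤ ENNReal.ofReal (4 * (ρ * exp (-t)) ^ 2) := volume_setOf_vnorm_lt_le (by positivity)
    _ ≤ ENNReal.ofReal (4 * ρ ^ 2 * exp (-t)) := by
        have : exp (-t) ≤ 1 := exp_le_one_iff.mpr (by linarith)
        apply ENNReal.ofReal_le_ofReal
        nlinarith [exp_pos (-t), sq_nonneg ρ]

lemma lintegral_posLog_div_vnorm_le {ρ : ℝ} (hρ : 0 < ρ) :
    ∫⁻ z : ℝ × ℝ, ENNReal.ofReal (log⁺ (ρ / vnorm z)) ≤ ENNReal.ofReal (4 * ρ ^ 2) :=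
  lintegral_ofReal_le_of_meas_lt_le_exp (measurable_posLog_div_vnorm ρ) (fun _ => posLog_nonneg)
    (by positivity) fun _ ht => volume_lt_posLog_div_vnorm_le hρ ht

lemma integrable_posLog_div_vnorm {ρ : ℝ} (hρ : 0 < ρ) :
    Integrable fun z : ℝ × ℝ => log⁺ (ρ / vnorm z) := by
  refine ⟨(measurable_posLog_div_vnorm ρ).aestronglyMeasurable, ?_⟩
  rw [hasFiniteIntegral_iff_ofReal (Filter.Eventually.of_forall fun _ => posLog_nonneg)]
  exact (lintegral_posLog_div_vnorm_le hρ).trans_lt ENNReal.ofReal_lt_top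

lemma integral_posLog_div_vnorm_le {ρ : ℝ} (hρ : 0 < ρ) :
    ∫ z : ℝ × ℝ, log⁺ (ρ / vnorm z) ≤ 4 * ρ ^ 2 := by
  rw [integral_eq_lintegral_of_nonneg_ae (Filter.Eventually.of_forall fun _ => posLog_nonneg)
    (measurable_posLog_div_vnorm ρ).aestronglyMeasurable]
  exact ENNReal.toReal_le_of_le_ofReal (by positivity) (lintegral_posLog_div_vnorm_le hρ)

section Potential

variable {w : ℝ × ℝ → ℝ}

lemma Gfun_nonneg (hw : ∀ᵐ y, 0 ≤ w y) (x : ℝ × ℝ) : 0 ≤ Gfun w x :=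
  integral_nonneg_of_ae <| by
    filter_upwards [hw] with y hy using mul_nonneg (ite_log_one_div_nonneg (vnorm_nonneg _)) hy

lemma measurable_Gfun (hw : Measurable w) : Measurable (Gfun w) := by
  have hd : Measurable fun p : (ℝ × ℝ) × (ℝ × ℝ) => vnorm (p.1 - p.2) :=
    continuous_vnorm.measurable.comp (measurable_fst.sub measurable_snd)
  have hk : Measurable fun p : (ℝ × ℝ) × (ℝ × ℝ) =>
      (if vnorm (p.1 - p.2) ≤ 1 then log (1 / vnorm (p.1 - p.2)) else 0) * w p.2 :=
    (Measurable.ite (measurableSet_le hd measurable_const)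
      (measurable_log.comp (measurable_const.div hd)) measurable_const).mul (hw.comp measurable_snd)
  exact hk.stronglyMeasurable.integral_prod_right'.measurable

variable {B ρ : ℝ}

lemma integrable_posLog_mul (hw : ∀ᵐ y, 0 ≤ w y ∧ w y ≤ B) (hwi : Integrable w) (hρ : 0 < ρ)
    (x : ℝ × ℝ) : Integrable fun y => log⁺ (ρ / vnorm (x - y)) * w y :=
  ((integrable_posLog_div_vnorm hρ).comp_sub_left x).mul_bdd hwi.aestronglyMeasurable <| by
    filter_upwards [hw] with y hy
    rw [Real.norm_eq_abs, abs_of_nonneg hy.1]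
    exact hy.2

lemma integral_posLog_mul_le (hw : ∀ᵐ y, 0 ≤ w y ∧ w y ≤ B) (hwi : Integrable w) (hρ : 0 < ρ)
    (x : ℝ × ℝ) : ∫ y, log⁺ (ρ / vnorm (x - y)) * w y ≤ B * (4 * ρ ^ 2) := by
  obtain ⟨y₀, hy₀⟩ := hw.exists
  have hlog := (integrable_posLog_div_vnorm hρ).comp_sub_left x
  calc ∫ y, log⁺ (ρ / vnorm (x - y)) * w y ≤ ∫ y, B * log⁺ (ρ / vnorm (x - y)) := by
        refine integral_mono_ae (integrable_posLog_mul hw hwi hρ x) (hlog.const_mul B) ?_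
        filter_upwards [hw] with y hy
        rw [mul_comm B]
        exact mul_le_mul_of_nonneg_left hy.2 posLog_nonneg
    _ = B * ∫ z, log⁺ (ρ / vnorm z) := by
        rw [MeasureTheory.integral_const_mul,
          integral_sub_left_eq_self (fun z => log⁺ (ρ / vnorm z)) volume x]
    _ ≤ B * (4 * ρ ^ 2) :=
        mul_le_mul_of_nonneg_left (integral_posLog_div_vnorm_le hρ) (hy₀.1.trans hy₀.2)

lemma Gfun_le {δ : ℝ} (hw : ∀ᵐ y, 0 ≤ w y ∧ w y ≤ B) (hwi : Integrable w) (hρ : 0 < ρ)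
    (hρδ : ρ ≤ δ) (hδ : δ ≤ 1) (x : ℝ × ℝ) :
    Gfun w x ≤ log (1 / δ) * (∫ y, w y)
      + (log (1 / ρ) - log (1 / δ)) * (∫ y in {y | vnorm (x - y) ≤ δ}, w y) + B * (4 * ρ ^ 2) := by
  set S := {y | vnorm (x - y) ≤ δ}
  have hS := measurableSet_setOf_vnorm_sub_le x δ
  have hSi : Integrable (S.indicator fun y => (log (1 / ρ) - log (1 / δ)) * w y) :=
    (hwi.const_mul _).indicator hS
  have hA : Integrable fun y =>
      log (1 / δ) * w y + S.indicator (fun y => (log (1 / ρ) - log (1 / δ)) * w y) y :=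
    (hwi.const_mul _).add hSi
  have hlog := integrable_posLog_mul hw hwi hρ x
  calc Gfun w x ≤ ∫ y, (log (1 / δ) * w y
        + S.indicator (fun y => (log (1 / ρ) - log (1 / δ)) * w y) y
        + log⁺ (ρ / vnorm (x - y)) * w y) := by
        refine integral_mono_of_nonneg ?_ (hA.add hlog) ?_
        · filter_upwards [hw] with y hy
          exact mul_nonneg (ite_log_one_div_nonneg (vnorm_nonneg _)) hy.1
        · filter_upwards [hw] with y hy
          have := mul_le_mul_of_nonneg_right
            (ite_log_one_div_le hρ hρδ hδ (vnorm_nonneg (x - y))) hy.1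
          simp only [Set.indicator_apply, S, Set.mem_ofPred_eq] at this ⊢
          split_ifs at this ⊢ <;> linarith
    _ = log (1 / δ) * (∫ y, w y) + (log (1 / ρ) - log (1 / δ)) * (∫ y in S, w y)
          + ∫ y, log⁺ (ρ / vnorm (x - y)) * w y := by
        rw [integral_add hA hlog, integral_add (hwi.const_mul _) hSi,
          MeasureTheory.integral_indicator hS, MeasureTheory.integral_const_mul,
          MeasureTheory.integral_const_mul]
    _ ≤ _ := by linarith [integral_posLog_mul_le hw hwi hρ x]

end Potential

lemma jap_nonneg (x : ℝ × ℝ) : 0 ≤ jap x := Real.sqrt_nonneg _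

lemma jap_sq (x : ℝ × ℝ) : jap x ^ 2 = 1 + vnorm x ^ 2 := by
  rw [jap, vnorm, Real.sq_sqrt (by positivity), Real.sq_sqrt (by positivity)]
  ring

lemma two_mul_jap_le {s : ℝ} (x : ℝ × ℝ) : 2 * s * jap x ≤ s ^ 2 + (1 + vnorm x ^ 2) := by
  nlinarith [sq_nonneg (jap x - s), jap_sq x]

lemma continuous_jap : Continuous jap := by
  unfold jap; fun_prop

section Mass

variable {w : ℝ × ℝ → ℝ}

lemma integrable_jap_mul (hw0 : ∀ᵐ x, 0 ≤ w x) (hwi : Integrable w)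
    (hw2i : Integrable fun x => (1 + vnorm x ^ 2) * w x) : Integrable fun x => jap x * w x := by
  refine hw2i.mono' (continuous_jap.aestronglyMeasurable.mul hwi.aestronglyMeasurable) ?_
  filter_upwards [hw0] with x hx
  rw [Real.norm_eq_abs, abs_of_nonneg (mul_nonneg (jap_nonneg x) hx)]
  have := two_mul_jap_le (s := 1) x
  exact mul_le_mul_of_nonneg_right (by nlinarith [sq_nonneg (vnorm x)]) hx

lemma two_mul_integral_jap_mul_le {s : ℝ} (hw0 : ∀ᵐ x, 0 ≤ w x) (hwi : Integrable w)
    (hw2i : Integrable fun x => (1 + vnorm x ^ 2) * w x) :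
    2 * s * ∫ x, jap x * w x ≤ s ^ 2 * (∫ x, w x) + ∫ x, (1 + vnorm x ^ 2) * w x := by
  rw [← MeasureTheory.integral_const_mul, ← MeasureTheory.integral_const_mul,
    ← integral_add (hwi.const_mul _) hw2i]
  refine integral_mono_ae ((integrable_jap_mul hw0 hwi hw2i).const_mul _)
    ((hwi.const_mul _).add hw2i) ?_
  filter_upwards [hw0] with x hx
  nlinarith [two_mul_jap_le (s := s) x]

end Mass

section Concentration

variable {K ε α : ℝ} {w : ℝ × ℝ → ℝ}

lemma Gfun_le_log_one_div_add (hε0 : 0 < ε) (hε1 : ε ≤ 1)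
    (hw : ∀ᵐ y, 0 ≤ w y ∧ w y ≤ K / ε ^ 2) (hwi : Integrable w) (hw1 : ∫ y, w y = 1)
    (x : ℝ × ℝ) : Gfun w x ≤ log (1 / ε) + 4 * K := by
  have h := Gfun_le hw hwi hε0 le_rfl hε1 x
  rwa [hw1, sub_self, zero_mul, add_zero, mul_one,
    show K / ε ^ 2 * (4 * ε ^ 2) = 4 * K by field_simp] at h

lemma half_lt_setIntegral_of_le_Gfun (hε0 : 0 < ε) (hε1 : ε ≤ 1)
    (hw : ∀ᵐ y, 0 ≤ w y ∧ w y ≤ K / ε ^ 2) (hwi : Integrable w) (hw1 : ∫ y, w y = 1)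
    (hα0 : 0 ≤ α) (hα2 : α ≤ 2) (hαL : 32 * K < α * log (1 / ε)) {x : ℝ × ℝ}
    (hx : (1 - α / 8) * log (1 / ε) ≤ Gfun w x) :
    1 / 2 < ∫ y in {y | vnorm (x - y) ≤ ε ^ (1 - α / 2)}, w y := by
  have hεδ : ε ≤ ε ^ (1 - α / 2) := by
    simpa using rpow_le_rpow_of_exponent_ge hε0 hε1 (show 1 - α / 2 ≤ 1 by linarith)
  have hδ1 : ε ^ (1 - α / 2) ≤ 1 := rpow_le_one hε0.le hε1 (by linarith)
  have h := Gfun_le hw hwi hε0 hεδ hδ1 x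
  rw [hw1, log_one_div_rpow hε0, show K / ε ^ 2 * (4 * ε ^ 2) = 4 * K by field_simp] at h
  by_contra! hhalf
  have hL : 0 ≤ log (1 / ε) := log_one_div_nonneg hε0.le hε1
  linarith [mul_le_mul_of_nonneg_left hhalf (mul_nonneg hα0 hL)]

lemma exists_setOf_le_vnorm_sub_subset_compl (hK : 0 ≤ K) (hε0 : 0 < ε) (hε1 : ε ≤ 1)
    (hw : ∀ᵐ y, 0 ≤ w y ∧ w y ≤ K / ε ^ 2) (hwi : Integrable w) (hw1 : ∫ y, w y = 1)
    (hα0 : 0 ≤ α) (hα2 : α ≤ 2) (hαL : 32 * K + 2 < α * log (1 / ε)) :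
    ∃ p, {x | ε ^ (1 - α) ≤ vnorm (x - p)} ⊆ {x | (1 - α / 8) * log (1 / ε) ≤ Gfun w x}ᶜ := by
  rcases Set.eq_empty_or_nonempty {x | (1 - α / 8) * log (1 / ε) ≤ Gfun w x} with hA | ⟨p, hp⟩
  · exact ⟨0, by rw [hA, Set.compl_empty]; exact Set.subset_univ _⟩
  refine ⟨p, fun x hx hxA => ?_⟩
  have hmass {y : ℝ × ℝ} (hy : (1 - α / 8) * log (1 / ε) ≤ Gfun w y) :=
    half_lt_setIntegral_of_le_Gfun hε0 hε1 hw hwi hw1 hα0 hα2 (by linarith) hy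
  have hclose := vnorm_sub_le_of_half_lt_setIntegral (hw.mono fun y hy => hy.1) hwi hw1.le
    (hmass hxA) (hmass hp)
  have := two_mul_rpow_lt_rpow hε0 (show 2 < α * log (1 / ε) by linarith)
  exact (show ¬ ε ^ (1 - α) ≤ vnorm (x - p) by linarith) hx

lemma integral_jap_mul_le_sqrt_two_add (hK : 0 ≤ K) (hε0 : 0 < ε) (hw0 : ∀ᵐ x, 0 ≤ w x)
    (hwi : Integrable w) (hw1 : ∫ x, w x = 1)
    (hw2i : Integrable fun x => (1 + vnorm x ^ 2) * w x)
    (hw2 : ∫ x, (1 + vnorm x ^ 2) * w x ≤ 2 + K * ε) :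
    ∫ x, jap x * w x ≤ √2 + K * ε := by
  have h := two_mul_integral_jap_mul_le (s := √2) hw0 hwi hw2i
  rw [hw1, sq_sqrt zero_le_two] at h
  have hs : 1 ≤ √2 := one_le_sqrt.mpr one_le_two
  nlinarith [mul_nonneg hK hε0.le, mul_self_sqrt (zero_le_two : (0 : ℝ) ≤ 2)]

lemma integral_integral_eq_integral_mul_Gfun (w : ℝ × ℝ → ℝ) :
    ∫ x, ∫ y, (if vnorm (x - y) ≤ 1 then log (1 / vnorm (x - y)) else 0) * jap x * w x * w y
      = ∫ x, jap x * w x * Gfun w x := by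
  congr 1; funext x
  rw [Gfun, ← MeasureTheory.integral_const_mul]
  congr 1; funext y
  ring

lemma mul_setIntegral_compl_superlevel_le (hK : 0 ≤ K) (hε0 : 0 < ε) (hε1 : ε ≤ 1)
    (hwm : Measurable w) (hw : ∀ᵐ y, 0 ≤ w y ∧ w y ≤ K / ε ^ 2) (hwi : Integrable w)
    (hw1 : ∫ y, w y = 1) (hw2i : Integrable fun x => (1 + vnorm x ^ 2) * w x)
    (hw2 : ∫ x, (1 + vnorm x ^ 2) * w x ≤ 2 + K * ε)
    (hEn : √2 * log (1 / ε) - K ≤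
      ∫ x, ∫ y, (if vnorm (x - y) ≤ 1 then log (1 / vnorm (x - y)) else 0) * jap x * w x * w y) :
    α * log (1 / ε) * ∫ x in {x | (1 - α / 8) * log (1 / ε) ≤ Gfun w x}ᶜ, jap x * w x
      ≤ 80 * K + 32 * K ^ 2 := by
  have hw0 : ∀ᵐ y, 0 ≤ w y := hw.mono fun y hy => hy.1
  have hjw := integrable_jap_mul hw0 hwi hw2i
  have hjw0 : ∀ᵐ x, 0 ≤ jap x * w x := hw0.mono fun x hx => mul_nonneg (jap_nonneg x) hx
  have hA := measurableSet_le (f := fun _ => (1 - α / 8) * log (1 / ε)) measurable_const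
    (measurable_Gfun hwm)
  have hsplit := integral_mul_le_of_superlevel ((1 - α / 8) * log (1 / ε)) hjw hjw0
    (measurable_Gfun hwm) (Gfun_nonneg hw0) (Gfun_le_log_one_div_add hε0 hε1 hw hwi hw1)
  have hm := integral_jap_mul_le_sqrt_two_add hK hε0 hw0 hwi hw1 hw2i hw2
  rw [← integral_add_compl hA hjw] at hsplit hm
  rw [integral_integral_eq_integral_mul_Gfun] at hEn
  have hb0 := setIntegral_nonneg_of_ae (s := {x | (1 - α / 8) * log (1 / ε) ≤ Gfun w x}ᶜ) hjw0
  have hL := log_one_div_nonneg hε0.le hε1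
  have hεL := mul_log_one_div_le_one hε0
  have hs : √2 ≤ 2 := by linarith [sqrt_two_lt_three_halves]
  -- `√2 L - K ≤ (L + 4K)(a + b) - (αL/8 + 4K) b` and `a + b ≤ √2 + Kε`: the `√2 L` terms cancel.
  generalize log (1 / ε) = L at *
  generalize ∫ x in {x | (1 - α / 8) * L ≤ Gfun w x}ᶜ, jap x * w x = b at *
  generalize ∫ x in {x | (1 - α / 8) * L ≤ Gfun w x}, jap x * w x = a at *
  linarith [mul_le_mul_of_nonneg_left hm (by positivity : 0 ≤ L + 4 * K), mul_nonneg hK hb0,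
    mul_le_mul_of_nonneg_left hεL hK, mul_le_mul_of_nonneg_left hε1 (sq_nonneg K),
    mul_le_mul_of_nonneg_left hs hK]

end Concentration

/-- concentration of the vorticity: under mass, second-moment,
boundedness and energy bounds, for every `α ∈ (0,1]` the ⟨x⟩-weighted mass
outside a ball of radius `ε^{1−α}` around some point `p*` is at most
`C/(α log(1/ε))`. -/
theorem stmt_17 : ∀ K > (0:ℝ), ∃ ε₀ ∈ Set.Ioo (0:ℝ) (1/2), ∃ C > (0:ℝ),
    ∀ ε : ℝ, 0 < ε → ε ≤ ε₀ →
    ∀ w : ℝ × ℝ → ℝ, Measurable w →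
    (∀ᵐ x : ℝ × ℝ, 0 ≤ w x ∧ w x ≤ K / ε ^ 2) →
    Integrable w → (∫ x : ℝ × ℝ, w x) = 1 →
    Integrable (fun x : ℝ × ℝ => (1 + vnorm x ^ 2) * w x) →
    (∫ x : ℝ × ℝ, (1 + vnorm x ^ 2) * w x) ≤ 2 + K * ε →
    Real.sqrt 2 * Real.log (1 / ε) - K ≤
      (∫ x : ℝ × ℝ, ∫ y : ℝ × ℝ,
        (if vnorm (x - y) ≤ 1 then Real.log (1 / vnorm (x - y)) else 0)
          * jap x * w x * w y) →
    ∀ α : ℝ, 0 < α → α ≤ 1 →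
    ∃ pstar : ℝ × ℝ,
      (∫ x in {x : ℝ × ℝ | ε ^ (1 - α) ≤ vnorm (x - pstar)}, jap x * w x)
        ≤ C / (α * Real.log (1 / ε)) := by
  intro K hK
  refine ⟨1 / 4, ⟨by norm_num, by norm_num⟩, 64 * (K + 1) ^ 2, by positivity, ?_⟩
  intro ε hε0 hε w hwm hw hwi hw1 hw2i hw2 hEn α hα0 _
  have hε1 : ε ≤ 1 := by linarith
  have hαL : 0 < α * log (1 / ε) := mul_pos hα0 (log_pos (one_lt_one_div hε0 (by linarith)))
  have hw0 : ∀ᵐ x, 0 ≤ w x := hw.mono fun x hx => hx.1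
  have hjw := integrable_jap_mul hw0 hwi hw2i
  have hjw0 : ∀ᵐ x, 0 ≤ jap x * w x := hw0.mono fun x hx => mul_nonneg (jap_nonneg x) hx
  by_cases hT : α * log (1 / ε) ≤ 32 * K + 2
  · refine ⟨0, (le_div_iff₀ hαL).mpr ?_⟩
    have hb := setIntegral_le_integral (s := {x | ε ^ (1 - α) ≤ vnorm (x - 0)}) hjw hjw0
    have hm := integral_jap_mul_le_sqrt_two_add hK.le hε0 hw0 hwi hw1 hw2i hw2
    have hs := sqrt_two_lt_three_halves
    have hb0 := setIntegral_nonneg_of_ae (s := {x | ε ^ (1 - α) ≤ vnorm (x - 0)}) hjw0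
    have hKε : K * ε ≤ K := mul_le_of_le_one_right hK.le hε1
    nlinarith [mul_le_mul_of_nonneg_right hT hb0]
  · obtain ⟨p, hp⟩ := exists_setOf_le_vnorm_sub_subset_compl hK.le hε0 hε1 hw hwi hw1 hα0.le
      (by linarith) (not_le.mp hT)
    refine ⟨p, (le_div_iff₀ hαL).mpr ?_⟩
    have hb := setIntegral_mono_set hjw.integrableOn (ae_restrict_of_ae hjw0) hp.eventuallyLE
    have := mul_setIntegral_compl_superlevel_le (α := α) hK.le hε0 hε1 hwm hw hwi hw1 hw2i hw2
      hEn
    nlinarith [mul_le_mul_of_nonneg_left hb hαL.le]
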